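/- arXiv:1102.1643 — 2 statements merged into one kernel-verified Lean document; each statement's English description precedes it below -/
import Mathlib

section
/- Let Q* be a polynomial over the integers that is a product of r distinct irreducible polynomials R_1, ..., R_r, and for a modulus m let ρ*(m) denote the number of residues n mod m with Q*(n) ≡ 0 (mod m), and ρ_{R_h}(m) the number of residues n mod m with R_h(n) ≡ 0 (mod m). Define ρ̂_R(n_1,...,n_r) as the number of residues n modulo L = lcm(n_1·κ(n_1), ..., n_r·κ(n_r)) such that n_h exactly divides R_h(n) for each h, where κ(n) is the squarefree kernel of n. Then ρ̂_R(n_1,...,n_r) / lcm(n_1·κ(n_1),...,n_r·κ(n_r)) ≤ ρ*(n_1 ⋯ n_r) / (n_1 ⋯ n_r). -/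
open Polynomial Finset
open scoped Classical

/-- Number of roots of `P` modulo `m`. -/
noncomputable def polyRho (P : Polynomial ℤ) (m : ℕ) : ℕ :=
  ((Finset.range m).filter fun n : ℕ => (m : ℤ) ∣ P.eval (n : ℤ)).card

/-- Squarefree kernel of `n`. -/
def kappa (n : ℕ) : ℕ := ∏ p ∈ n.primeFactors, p

/-- `a` exactly divides `b` : `a ∣ b` and `gcd(a, b/a) = 1`. -/
def exactDiv (a : ℕ) (b : ℤ) : Prop := (a : ℤ) ∣ b ∧ Int.gcd (a : ℤ) (b / (a : ℤ)) = 1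

/-!
Both sides are densities of periodic sets of integers. Whether `n_h ‖ R_h(m)` depends only on
`m` modulo `n_h κ(n_h)`, since coprimality of `R_h(m) / n_h` with `n_h` depends only on its residue
modulo `κ(n_h)`; so the left side is the density of an `L`-periodic set. Every `m` in it satisfies
`∏ n_h ∣ Q*(m)`, a condition of period `∏ n_h` whose density is the right side, and densities of
periodic sets are monotone under inclusion.
-/

lemma prime_dvd_kappa {a p : ℕ} (hp : p.Prime) (hpa : p ∣ a) (ha : a ≠ 0) : p ∣ kappa a :=
  Finset.dvd_prod_of_mem _ (Nat.mem_primeFactors.mpr ⟨hp, hpa, ha⟩)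

lemma gcd_eq_one_of_kappa_dvd_sub {a : ℕ} (ha : a ≠ 0) {x y : ℤ}
    (hxy : (kappa a : ℤ) ∣ x - y) (hx : Int.gcd a x = 1) : Int.gcd a y = 1 := by
  refine Nat.coprime_of_dvd fun p hp hpa hpy =>
    hp.one_lt.ne' (Nat.eq_one_of_dvd_coprimes hx hpa ?_)
  have hpxy : (p : ℤ) ∣ x - y := (Int.natCast_dvd_natCast.mpr (prime_dvd_kappa hp hpa ha)).trans hxy
  exact Int.natCast_dvd.mp ((dvd_iff_dvd_of_dvd_sub hpxy).mpr (Int.natCast_dvd.mpr hpy))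

lemma exactDiv_of_dvd_sub {a : ℕ} (ha : a ≠ 0) {b b' : ℤ}
    (h : ((a * kappa a : ℕ) : ℤ) ∣ b - b') (hb : exactDiv a b) : exactDiv a b' := by
  obtain ⟨⟨c, rfl⟩, hc⟩ := hb
  obtain ⟨t, ht⟩ := h
  have ha' : (a : ℤ) ≠ 0 := by exact_mod_cast ha
  obtain rfl : b' = a * (c - kappa a * t) := by push_cast at ht; linear_combination -ht
  rw [Int.mul_ediv_cancel_left _ ha'] at hc
  refine ⟨dvd_mul_right _ _, ?_⟩
  rw [Int.mul_ediv_cancel_left _ ha']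
  exact gcd_eq_one_of_kappa_dvd_sub ha ⟨t, by ring⟩ hc

lemma exactDiv_congr {a : ℕ} (ha : a ≠ 0) {b b' : ℤ}
    (h : ((a * kappa a : ℕ) : ℤ) ∣ b - b') : exactDiv a b ↔ exactDiv a b' :=
  ⟨exactDiv_of_dvd_sub ha h, exactDiv_of_dvd_sub ha (by simpa using h.neg_right)⟩

lemma dvd_eval_add_sub_eval (P : ℤ[X]) (m d : ℕ) :
    (d : ℤ) ∣ P.eval ((m + d : ℕ) : ℤ) - P.eval (m : ℤ) := by
  simpa using P.sub_dvd_eval_sub ((m + d : ℕ) : ℤ) m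

lemma periodic_exactDiv_eval (P : ℤ[X]) {a d : ℕ} (ha : a ≠ 0) (hd : a * kappa a ∣ d) :
    Function.Periodic (fun m : ℕ => exactDiv a (P.eval (m : ℤ))) d := fun m =>
  propext (exactDiv_congr ha ((Int.natCast_dvd_natCast.mpr hd).trans (dvd_eval_add_sub_eval P m d)))

lemma periodic_dvd_eval (P : ℤ[X]) (d : ℕ) :
    Function.Periodic (fun m : ℕ => (d : ℤ) ∣ P.eval (m : ℤ)) d := fun m =>
  propext (dvd_iff_dvd_of_dvd_sub (dvd_eval_add_sub_eval P m d))

lemma Nat.count_mul_of_periodic {p : ℕ → Prop} [DecidablePred p] {d : ℕ}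
    (hp : Function.Periodic p d) (k : ℕ) : Nat.count p (d * k) = Nat.count p d * k := by
  induction k with
  | zero => simp
  | succ k ih =>
    have hshift : (fun j => p (d * k + j)) = p := funext fun j => by
      simpa [add_comm, mul_comm] using (hp.nat_mul k) j
    simp only [mul_add_one, Nat.count_add, hshift, ih]

lemma Nat.count_mul_le_of_periodic {p q : ℕ → Prop} [DecidablePred p] [DecidablePred q]
    {a b : ℕ} (hp : Function.Periodic p a) (hq : Function.Periodic q b) (hpq : ∀ m, p m → q m) :
    Nat.count p a * b ≤ Nat.count q b * a := by
  rw [← Nat.count_mul_of_periodic hp, ← Nat.count_mul_of_periodic hq, mul_comm b]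
  exact Nat.count_mono_left fun m _ => hpq m

theorem stmt0_general (r : ℕ) (R : Fin r → Polynomial ℤ)
    (n : Fin r → ℕ) :
    ((((Finset.range (Finset.univ.lcm fun h => n h * kappa (n h))).filter
          fun m : ℕ => ∀ h, exactDiv (n h) ((R h).eval (m : ℤ))).card : ℝ) /
        ((Finset.univ.lcm fun h => n h * kappa (n h) : ℕ) : ℝ)) ≤
      (polyRho (∏ h, R h) (∏ h, n h) : ℝ) / ((∏ h, n h : ℕ) : ℝ) := by
  set L : ℕ := Finset.univ.lcm fun h => n h * kappa (n h)
  set N : ℕ := ∏ h, n h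
  rcases Nat.eq_zero_or_pos L with hL | hL
  · -- some `n h = 0`, so `n h * kappa (n h) = 0` and the left side is a division by zero
    rw [hL, Nat.cast_zero, div_zero]
    positivity
  have hdvdL : ∀ h, n h * kappa (n h) ∣ L := fun h => Finset.dvd_lcm (mem_univ h)
  have hn : ∀ h, n h ≠ 0 := fun h h0 =>
    hL.ne' (Nat.eq_zero_of_zero_dvd (by simpa [h0] using hdvdL h))
  have hN : 0 < N := Finset.prod_pos fun h _ => Nat.pos_of_ne_zero (hn h)
  have hexact : Function.Periodic (fun m : ℕ => ∀ h, exactDiv (n h) ((R h).eval (m : ℤ))) L :=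
    fun m => forall_congr fun h =>
      periodic_exactDiv_eval (R h) (hn h) (hdvdL h) m
  have hroot : ∀ m : ℕ, (∀ h, exactDiv (n h) ((R h).eval (m : ℤ))) →
      (N : ℤ) ∣ (∏ h, R h).eval (m : ℤ) := fun m hm => by
    rw [eval_prod, Nat.cast_prod]
    exact Finset.prod_dvd_prod_of_dvd _ _ fun h _ => (hm h).1
  rw [div_le_div_iff₀ (by positivity) (by positivity), polyRho,
    ← Nat.count_eq_card_filter_range, ← Nat.count_eq_card_filter_range]
  exact_mod_cast Nat.count_mul_le_of_periodic hexact (periodic_dvd_eval _ N) hroot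

theorem stmt0 (r : ℕ) (hr : 0 < r) (R : Fin r → Polynomial ℤ)
    (hirr : ∀ h, Irreducible (R h)) (hdist : ∀ i j, i ≠ j → R i ≠ R j)
    (n : Fin r → ℕ) (hn : ∀ h, 0 < n h) :
    ((((Finset.range (Finset.univ.lcm fun h => n h * kappa (n h))).filter
          fun m : ℕ => ∀ h, exactDiv (n h) ((R h).eval (m : ℤ))).card : ℝ) /
        ((Finset.univ.lcm fun h => n h * kappa (n h) : ℕ) : ℝ)) ≤
      (polyRho (∏ h, R h) (∏ h, n h) : ℝ) / ((∏ h, n h : ℕ) : ℝ) :=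
  stmt0_general r R n
end

section
/- Let R_h and R_i be two distinct monic irreducible polynomials in ℤ[X] dividing a separable polynomial Q* with discriminant D*. Suppose a_h, a_i are positive integers with gcd(a_h, D*) = gcd(a_i, D*) = 1, and suppose there exists an integer n such that a_h | R_h(n) and a_i | R_i(n). Then gcd(a_h, a_i) = 1. -/
open Polynomial

/-- Sylvester matrix of `P` and `Q` (rows are shifted coefficient vectors:
`Q.natDegree` rows of coefficients of `P` and `P.natDegree` rows of
coefficients of `Q`). -/
noncomputable def sylvesterMatrix (P Q : Polynomial ℤ) :
    Matrix (Fin (Q.natDegree + P.natDegree)) (Fin (Q.natDegree + P.natDegree)) ℤ :=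
  Matrix.of fun i j =>
    if (i : ℕ) < Q.natDegree then
      if (i : ℕ) ≤ (j : ℕ) then P.coeff ((j : ℕ) - (i : ℕ)) else 0
    else
      if (i : ℕ) - Q.natDegree ≤ (j : ℕ) then
        Q.coeff ((j : ℕ) - ((i : ℕ) - Q.natDegree)) else 0

/-- The resultant of two integer polynomials, as the determinant of their
Sylvester matrix. -/
noncomputable def intResultant (P Q : Polynomial ℤ) : ℤ :=
  (sylvesterMatrix P Q).det

/-- The discriminant (up to sign and a power of the leading coefficient)
of an integer polynomial: the resultant of `P` and its derivative. -/
noncomputable def intDiscriminant (P : Polynomial ℤ) : ℤ :=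
  intResultant P (derivative P)

/-!
A common prime factor `p` of `ah` and `ai` would make `n` a root modulo `p` of both `Rh` and `Ri`,
hence a double root of `Q` modulo `p`, because `Rh * Ri ∣ Q` (the factors are distinct monic
irreducibles). A common root `x` of two polynomials makes the powers `(x ^ j)` a nonzero kernel
vector of their Sylvester matrix, so `p` would divide the resultant of `Q` and `Q'`, that is the
discriminant of `Q`, which is coprime to `ah`.
-/

lemma sum_ite_coeff_mul_pow {A : Type*} [CommRing A] (f : ℤ →+* A) (R : ℤ[X]) {N : ℕ} (s : ℕ)
    (h : R.natDegree + s < N) (x : A) :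
    ∑ j : Fin N, (if s ≤ (j : ℕ) then f (R.coeff ((j : ℕ) - s)) else 0) * x ^ (j : ℕ)
      = R.eval₂ f x * x ^ s := by
  rw [Fin.sum_univ_eq_sum_range (fun j => (if s ≤ j then f (R.coeff (j - s)) else 0) * x ^ j),
    ← Finset.sum_range_add_sum_Ico _ (by omega : s ≤ N)]
  have hlow : ∑ j ∈ Finset.range s, (if s ≤ j then f (R.coeff (j - s)) else 0) * x ^ j = 0 :=
    Finset.sum_eq_zero fun j hj => by rw [if_neg (by simpa using hj), zero_mul]
  have hshift : ∀ k ∈ Finset.range (N - s),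
      (if s ≤ s + k then f (R.coeff (s + k - s)) else 0) * x ^ (s + k)
        = f (R.coeff k) * x ^ k * x ^ s := fun k _ => by
    rw [if_pos (Nat.le_add_right _ _), Nat.add_sub_cancel_left, pow_add]
    ring
  rw [hlow, zero_add, Finset.sum_Ico_eq_sum_range, Finset.sum_congr rfl hshift,
    ← Finset.sum_mul, ← eval₂_eq_sum_range' f (by omega) x]

lemma sylvesterMatrix_map_mulVec_pow {A : Type*} [CommRing A] (f : ℤ →+* A) (P Q : ℤ[X])
    (x : A) (i : Fin (Q.natDegree + P.natDegree)) :
    ((sylvesterMatrix P Q).map f).mulVec (fun j => x ^ (j : ℕ)) i =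
      if (i : ℕ) < Q.natDegree then P.eval₂ f x * x ^ (i : ℕ)
      else Q.eval₂ f x * x ^ ((i : ℕ) - Q.natDegree) := by
  simp only [Matrix.mulVec, dotProduct, Matrix.map_apply, sylvesterMatrix, Matrix.of_apply]
  split_ifs with hi
  · simp only [apply_ite f, map_zero]
    exact sum_ite_coeff_mul_pow f P _ (by omega) x
  · simp only [apply_ite f, map_zero]
    exact sum_ite_coeff_mul_pow f Q _ (by omega) x

lemma map_intResultant_eq_zero_of_eval₂_eq_zero {A : Type*} [CommRing A] [IsDomain A]
    (f : ℤ →+* A) {P Q : ℤ[X]} (hdeg : 0 < Q.natDegree + P.natDegree) {x : A}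
    (hP : P.eval₂ f x = 0) (hQ : Q.eval₂ f x = 0) : f (intResultant P Q) = 0 := by
  rw [intResultant, RingHom.map_det, RingHom.mapMatrix_apply, ← Matrix.exists_mulVec_eq_zero_iff]
  refine ⟨fun j => x ^ (j : ℕ), fun hv => by simpa using congrFun hv ⟨0, hdeg⟩, ?_⟩
  funext i
  rw [sylvesterMatrix_map_mulVec_pow, hP, hQ, zero_mul, zero_mul, ite_self, Pi.zero_apply]

lemma prime_dvd_intResultant_of_dvd_eval {p : ℕ} (hp : p.Prime) {P Q : ℤ[X]}
    (hdeg : 0 < Q.natDegree + P.natDegree) {n : ℤ}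
    (hP : (p : ℤ) ∣ P.eval n) (hQ : (p : ℤ) ∣ Q.eval n) : (p : ℤ) ∣ intResultant P Q := by
  have := Fact.mk hp
  rw [← ZMod.intCast_zmod_eq_zero_iff_dvd] at hP hQ ⊢
  refine map_intResultant_eq_zero_of_eval₂_eq_zero (Int.castRingHom (ZMod p)) hdeg
    (x := (n : ZMod p)) ?_ ?_
  · simpa [eval₂_at_intCast] using hP
  · simpa [eval₂_at_intCast] using hQ

lemma prime_dvd_intDiscriminant_of_mul_dvd {p : ℕ} (hp : p.Prime) {Q A B : ℤ[X]}
    (hAB : A * B ∣ Q) (hdeg : 0 < Q.natDegree) {n : ℤ}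
    (hA : (p : ℤ) ∣ A.eval n) (hB : (p : ℤ) ∣ B.eval n) : (p : ℤ) ∣ intDiscriminant Q := by
  obtain ⟨C, rfl⟩ := hAB
  refine prime_dvd_intResultant_of_dvd_eval hp (by omega) (n := n) ?_ ?_
  · rw [eval_mul, eval_mul]
    exact dvd_mul_of_dvd_left (dvd_mul_of_dvd_left hA _) _
  · rw [mul_assoc, derivative_mul, eval_add, eval_mul, eval_mul, eval_mul]
    exact dvd_add (dvd_mul_of_dvd_right (dvd_mul_of_dvd_left hB _) _) (dvd_mul_of_dvd_left hA _)

lemma Polynomial.Monic.mul_dvd_of_irreducible_of_ne {R : Type*} [CommRing R] [IsDomain R]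
    [UniqueFactorizationMonoid R] {F G Q : R[X]} (hF : F.Monic) (hG : G.Monic)
    (hFirr : Irreducible F) (hGirr : Irreducible G) (hne : F ≠ G) (hFQ : F ∣ Q) (hGQ : G ∣ Q) :
    F * G ∣ Q := by
  obtain ⟨T, rfl⟩ := hFQ
  have hGF : ¬ G ∣ F := fun h =>
    hne (eq_of_monic_of_associated hF hG (hGirr.associated_of_dvd hFirr h).symm)
  exact mul_dvd_mul_left F ((hGirr.prime.dvd_or_dvd hGQ).resolve_left hGF)

theorem stmt6_general (Q Rh Ri : Polynomial ℤ) (hQsf : Squarefree Q)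
    (hmh : Rh.Monic) (hmi : Ri.Monic)
    (hirrh : Irreducible Rh) (hirri : Irreducible Ri) (hne : Rh ≠ Ri)
    (hdvdh : Rh ∣ Q) (hdvdi : Ri ∣ Q)
    (ah ai : ℕ)
    (hcoph : Nat.Coprime ah (intDiscriminant Q).natAbs)
    (n : ℤ) (hh : (ah : ℤ) ∣ Rh.eval n) (hi : (ai : ℤ) ∣ Ri.eval n) :
    Nat.Coprime ah ai := by
  have hdegRh : 0 < Rh.natDegree :=
    Nat.pos_of_ne_zero fun h => hirrh.not_isUnit (hmh.natDegree_eq_zero.mp h ▸ isUnit_one)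
  have hdegQ : 0 < Q.natDegree := hdegRh.trans_le (natDegree_le_of_dvd hdvdh hQsf.ne_zero)
  refine Nat.coprime_of_dvd fun p hp hpah hpai => ?_
  have hpD : (p : ℤ) ∣ intDiscriminant Q :=
    prime_dvd_intDiscriminant_of_mul_dvd hp
      (hmh.mul_dvd_of_irreducible_of_ne hmi hirrh hirri hne hdvdh hdvdi) hdegQ
      ((Int.natCast_dvd_natCast.mpr hpah).trans hh) ((Int.natCast_dvd_natCast.mpr hpai).trans hi)
  exact (hp.coprime_iff_not_dvd.mp (hcoph.coprime_dvd_left hpah)) (Int.natCast_dvd.mp hpD)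

theorem stmt6 (Q Rh Ri : Polynomial ℤ) (hQsf : Squarefree Q)
    (hmh : Rh.Monic) (hmi : Ri.Monic)
    (hirrh : Irreducible Rh) (hirri : Irreducible Ri) (hne : Rh ≠ Ri)
    (hdvdh : Rh ∣ Q) (hdvdi : Ri ∣ Q)
    (ah ai : ℕ) (hah : 0 < ah) (hai : 0 < ai)
    (hcoph : Nat.Coprime ah (intDiscriminant Q).natAbs)
    (hcopi : Nat.Coprime ai (intDiscriminant Q).natAbs)
    (n : ℤ) (hh : (ah : ℤ) ∣ Rh.eval n) (hi : (ai : ℤ) ∣ Ri.eval n) :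
    Nat.Coprime ah ai :=
  stmt6_general Q Rh Ri hQsf hmh hmi hirrh hirri hne hdvdh hdvdi ah ai hcoph n hh hi
end
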